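/- arXiv:1904.01441 — 4 statements merged into one kernel-verified Lean document; each statement's English description precedes it below -/
import Mathlib

section
/- Let N >= 2 and let A, B be nonnegative vectors in R^N with sums a = a_1 + ... + a_N and b = b_1 + ... + b_N. For each index i, the condition 0 <= a_i - ((N+a-1)/(N+b)) b_i <= (N+a-1)/(N+b) is equivalent to the conjunction of 0 <= a_i - ((N + (a - a_i) - 1)/(N + (b - b_i))) b_i and a_i/(b_i+1) <= (N + (a - a_i) - 1)/(N + (b - b_i) - 1). -/
/-- Equivalence of the two forms of the necessary condition in Theorem 1.1. -/
theorem stmt1 (n : ℕ) (hn : 1 ≤ n) (A B : Fin (n + 1) → ℝ)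
    (hA : ∀ j, 0 ≤ A j) (hB : ∀ j, 0 ≤ B j) (i : Fin (n + 1)) :
    (0 ≤ A i - (((n : ℝ) + 1 + (∑ j, A j) - 1) / ((n : ℝ) + 1 + ∑ j, B j)) * B i ∧
      A i - (((n : ℝ) + 1 + (∑ j, A j) - 1) / ((n : ℝ) + 1 + ∑ j, B j)) * B i ≤
        ((n : ℝ) + 1 + (∑ j, A j) - 1) / ((n : ℝ) + 1 + ∑ j, B j)) ↔
    (0 ≤ A i - (((n : ℝ) + 1 + ((∑ j, A j) - A i) - 1) /
          ((n : ℝ) + 1 + ((∑ j, B j) - B i))) * B i ∧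
      A i / (B i + 1) ≤
        ((n : ℝ) + 1 + ((∑ j, A j) - A i) - 1) / ((n : ℝ) + 1 + ((∑ j, B j) - B i) - 1)) := by
  set S := ∑ j, A j with hS
  set T := ∑ j, B j with hT
  have hx : 0 ≤ A i := hA i
  have hy : 0 ≤ B i := hB i
  have hyT : B i ≤ T := Finset.single_le_sum (fun j _ => hB j) (Finset.mem_univ i)
  have hT0 : 0 ≤ T := Finset.sum_nonneg (fun j _ => hB j)
  have hn1 : (1 : ℝ) ≤ (n : ℝ) := by exact_mod_cast hn
  have hq1 : (0 : ℝ) < (n : ℝ) + 1 + T := by linarith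
  have hq2 : (0 : ℝ) < (n : ℝ) + 1 + (T - B i) := by linarith
  have hq3 : (0 : ℝ) < (n : ℝ) + 1 + (T - B i) - 1 := by linarith
  have hq4 : (0 : ℝ) < B i + 1 := by linarith
  have e1 : (0 ≤ A i - (((n : ℝ) + 1 + S - 1) / ((n : ℝ) + 1 + T)) * B i) ↔
      (0 ≤ A i - (((n : ℝ) + 1 + (S - A i) - 1) / ((n : ℝ) + 1 + (T - B i))) * B i) := by
    rw [sub_nonneg, sub_nonneg, div_mul_eq_mul_div, div_le_iff₀ hq1,
      div_mul_eq_mul_div, div_le_iff₀ hq2]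
    constructor <;> intro h <;> nlinarith [sq_nonneg (A i), sq_nonneg (B i)]
  have e2 : (A i - (((n : ℝ) + 1 + S - 1) / ((n : ℝ) + 1 + T)) * B i ≤
        ((n : ℝ) + 1 + S - 1) / ((n : ℝ) + 1 + T)) ↔
      (A i / (B i + 1) ≤
        ((n : ℝ) + 1 + (S - A i) - 1) / ((n : ℝ) + 1 + (T - B i) - 1)) := by
    rw [sub_le_iff_le_add, div_le_div_iff₀ hq4 hq3, div_mul_eq_mul_div,
      ← add_div, le_div_iff₀ hq1]
    constructor <;> intro h <;> nlinarith [sq_nonneg (A i), sq_nonneg (B i)]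
  exact and_congr e1 e2
end

section
/- Let N >= 2, t > 2, and let B = (b_1,...,b_N) be a nonnegative vector in R^N. Then ∫_{B(te_i,1)} |x_1|^{b_1}···|x_N|^{b_N} dx >= t^{b_i} (∫_{B_{N-1}(1)} x̄_i^{B̄_i} dx̄_i) (∫_0^1 (1-y^2)^{(b̄_i + N - 1)/2} dy), where b̄_i = b - b_i. -/
open MeasureTheory Pointwise

lemma contProd {m : ℕ} (β : Fin m → ℝ) (hβ : ∀ k, 0 ≤ β k) :
    Continuous (fun z : EuclideanSpace ℝ (Fin m) => ∏ k, |z k| ^ β k) := by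
  refine continuous_finset_prod _ fun k _ => ?_
  have h1 : Continuous fun z : EuclideanSpace ℝ (Fin m) => |z k| :=
    continuous_abs.comp (EuclideanSpace.proj k).continuous
  rw [continuous_iff_continuousAt]
  intro z
  exact (Real.continuousAt_rpow_const _ _ (Or.inr (hβ k))).comp h1.continuousAt

lemma scaleBall {m : ℕ} (β : Fin m → ℝ) {r : ℝ} (hr : 0 < r) :
    ∫ z in Metric.ball (0 : EuclideanSpace ℝ (Fin m)) r, ∏ k, |z k| ^ β k
      = r ^ ((m : ℝ) + ∑ k, β k) *
        ∫ z in Metric.ball (0 : EuclideanSpace ℝ (Fin m)) 1, ∏ k, |z k| ^ β k := by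
  have h := MeasureTheory.Measure.setIntegral_comp_smul_of_pos (volume)
    (fun z : EuclideanSpace ℝ (Fin m) => ∏ k, |z k| ^ β k) (Metric.ball 0 1) hr
  have hball : r • Metric.ball (0 : EuclideanSpace ℝ (Fin m)) 1 = Metric.ball 0 r := by
    rw [smul_unitBall hr.ne', Real.norm_eq_abs, abs_of_pos hr]
  have key : ∀ x : EuclideanSpace ℝ (Fin m),
      (∏ k, |(r • x) k| ^ β k) = r ^ (∑ k, β k) * ∏ k, |x k| ^ β k := by
    intro x
    rw [Real.rpow_sum_of_pos hr, ← Finset.prod_mul_distrib]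
    refine Finset.prod_congr rfl fun k _ => ?_
    rw [PiLp.smul_apply, smul_eq_mul, abs_mul, abs_of_pos hr,
      Real.mul_rpow hr.le (abs_nonneg _)]
  simp only [key] at h
  rw [integral_const_mul, hball, finrank_euclideanSpace_fin, smul_eq_mul] at h
  have hrm : (0:ℝ) < r ^ m := pow_pos hr m
  rw [Real.rpow_add hr, Real.rpow_natCast]
  field_simp at h ⊢
  linarith [h]

lemma piToBall {n : ℕ} (β : Fin n → ℝ) (u : ℝ) (hu0 : 0 < u) :
    ∫ y in {y : Fin n → ℝ | ∑ k, (y k)^2 < u}, ∏ k, |y k| ^ β k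
      = ∫ z in Metric.ball (0 : EuclideanSpace ℝ (Fin n)) (Real.sqrt u),
          ∏ k, |z k| ^ β k := by
  set r := Real.sqrt u with hr
  have hr0 : 0 < r := Real.sqrt_pos.2 hu0
  have h := (EuclideanSpace.volume_preserving_symm_measurableEquiv_toLp (Fin n)).setIntegral_preimage_emb
    (MeasurableEquiv.toLp 2 (Fin n → ℝ)).symm.measurableEmbedding
    (fun y : Fin n → ℝ => ∏ k, |y k| ^ β k) {y : Fin n → ℝ | ∑ k, (y k)^2 < u}
  rw [← h]
  have hset : (MeasurableEquiv.toLp 2 (Fin n → ℝ)).symm ⁻¹' {y : Fin n → ℝ | ∑ k, (y k)^2 < u}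
      = Metric.ball (0 : EuclideanSpace ℝ (Fin n)) r := by
    ext z
    simp only [Set.mem_preimage, Set.mem_setOf_eq, Metric.mem_ball, EuclideanSpace.dist_eq,
      Real.sqrt_lt' hr0, Real.sq_sqrt hu0.le, hr]
    have : ∀ k, dist (z k) ((0 : EuclideanSpace ℝ (Fin n)) k) ^ 2 = (z k) ^ 2 := by
      intro k
      simp [Real.dist_eq, sq_abs]
    simp_rw [this]
    exact (Real.sqrt_lt_sqrt_iff (Finset.sum_nonneg fun k _ => sq_nonneg _)).symm
  rw [hset]
  rfl

/-- Lower bound for the monomial-weighted volume of the unit ball centered at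
`t e_i`, `t > 2`. -/
theorem stmt3 (n : ℕ) (hn : 1 ≤ n) (t : ℝ) (ht : 2 < t)
    (B : Fin (n + 1) → ℝ) (hB : ∀ j, 0 ≤ B j) (i : Fin (n + 1)) :
    t ^ B i *
        (∫ y in Metric.ball (0 : EuclideanSpace ℝ (Fin n)) 1,
          ∏ j, |y j| ^ B (i.succAbove j)) *
        (∫ s in Set.Ioo (0 : ℝ) 1,
          (1 - s ^ 2) ^ (((∑ j, B j) - B i + (n : ℝ) + 1 - 1) / 2)) ≤
      ∫ x in Metric.ball (EuclideanSpace.single i t : EuclideanSpace ℝ (Fin (n + 1))) 1,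
        ∏ j, |x j| ^ B j := by
  have ht0 : (0:ℝ) < t := by linarith
  set bb : ℝ := ∑ k, B (i.succAbove k) with hbb
  have hsum : (∑ j, B j) = B i + bb := Fin.sum_univ_succAbove B i
  set e : ℝ := ((n:ℝ) + bb) / 2 with he
  set A := ∫ y in Metric.ball (0 : EuclideanSpace ℝ (Fin n)) 1,
      ∏ j, |y j| ^ B (i.succAbove j) with hA
  have hA0 : 0 ≤ A := setIntegral_nonneg measurableSet_ball
    (fun y _ => Finset.prod_nonneg fun k _ => Real.rpow_nonneg (abs_nonneg _) _)
  set f : EuclideanSpace ℝ (Fin (n+1)) → ℝ := fun x => ∏ j, |x j| ^ B j with hf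
  have hfc : Continuous f := contProd B hB
  set S := Metric.ball (EuclideanSpace.single i t : EuclideanSpace ℝ (Fin (n+1))) 1 with hS
  have hf0 : ∀ x, 0 ≤ f x := fun x =>
    Finset.prod_nonneg fun k _ => Real.rpow_nonneg (abs_nonneg _) _
  have hInt : IntegrableOn f S volume :=
    (hfc.continuousOn.integrableOn_compact (isCompact_closedBall _ _)).mono_set
      Metric.ball_subset_closedBall
  set φ := (MeasurableEquiv.toLp 2 (Fin (n+1) → ℝ)) with hφdef
  have hφ : MeasurePreserving φ volume volume :=
    (EuclideanSpace.volume_preserving_symm_measurableEquiv_toLp _).symm _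
  set ψ := (MeasurableEquiv.piFinSuccAbove (fun _ : Fin (n+1) => ℝ) i).symm with hψdef
  have hψ : MeasurePreserving ψ (volume.prod volume) volume :=
    (volume_preserving_piFinSuccAbove (fun _ : Fin (n+1) => ℝ) i).symm _
  set G : ℝ × (Fin n → ℝ) → ℝ := fun p => S.indicator f (φ (ψ p)) with hG
  have h1 : Integrable (S.indicator f) volume :=
    (integrable_indicator_iff measurableSet_ball).2 hInt
  have h2 : Integrable (S.indicator f ∘ φ) volume :=
    (hφ.integrable_comp_emb φ.measurableEmbedding).2 h1
  have h3 : Integrable G (volume.prod volume) :=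
    (hψ.integrable_comp_emb ψ.measurableEmbedding).2 h2
  have hRHS : ∫ x in S, f x = ∫ a : ℝ, ∫ y : Fin n → ℝ, G (a, y) := by
    rw [← integral_indicator measurableSet_ball,
      ← hφ.integral_comp φ.measurableEmbedding,
      ← hψ.integral_comp ψ.measurableEmbedding]
    exact (integral_prod _ h3)
  -- explicit form of G
  have hGeq : ∀ (a : ℝ) (y : Fin n → ℝ), G (a, y)
      = Set.indicator {y : Fin n → ℝ | ∑ k, (y k)^2 < 1 - (a - t)^2}
        (fun y => |a| ^ B i * ∏ k, |y k| ^ B (i.succAbove k)) y := by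
    intro a y
    have hcoord : ∀ j, (φ (ψ (a, y))) j = (Fin.insertNth i a y : Fin (n+1) → ℝ) j :=
      fun j => rfl
    have hval : f (φ (ψ (a, y))) = |a| ^ B i * ∏ k, |y k| ^ B (i.succAbove k) := by
      show (∏ j, |(φ (ψ (a, y))) j| ^ B j) = _
      simp_rw [hcoord]
      rw [Fin.prod_univ_succAbove (fun j => |(Fin.insertNth i a y : Fin (n+1) → ℝ) j| ^ B j) i]
      simp [Fin.insertNth_apply_same, Fin.insertNth_apply_succAbove]
    have hiff : (φ (ψ (a, y)) ∈ S) ↔ ∑ k, (y k)^2 < 1 - (a - t)^2 := by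
      rw [hS, Metric.mem_ball, EuclideanSpace.dist_eq, Real.sqrt_lt' one_pos, one_pow]
      have hd : ∀ j, dist ((φ (ψ (a, y))) j) (EuclideanSpace.single i t j) ^ 2
          = ((Fin.insertNth i a y : Fin (n+1) → ℝ) j - EuclideanSpace.single i t j) ^ 2 := by
        intro j; rw [hcoord, Real.dist_eq, sq_abs]
      simp_rw [hd]
      rw [Fin.sum_univ_succAbove
        (fun j => ((Fin.insertNth i a y : Fin (n+1) → ℝ) j - EuclideanSpace.single i t j) ^ 2) i]
      simp only [Fin.insertNth_apply_same, Fin.insertNth_apply_succAbove,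
        EuclideanSpace.single_apply, if_pos rfl]
      have hz : ∀ k : Fin n, (if i.succAbove k = i then t else 0) = 0 := fun k =>
        if_neg (Fin.succAbove_ne i k)
      simp only [hz, sub_zero, if_true]
      constructor <;> intro h <;> linarith
    by_cases hmem : ∑ k, (y k)^2 < 1 - (a - t)^2
    · rw [Set.indicator_of_mem
          (show y ∈ {y : Fin n → ℝ | ∑ k, (y k)^2 < 1 - (a - t)^2} from hmem),
        show G (a, y) = S.indicator f (φ (ψ (a, y))) from rfl,
        Set.indicator_of_mem (hiff.mpr hmem), hval]
    · rw [Set.indicator_of_notMem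
          (show y ∉ {y : Fin n → ℝ | ∑ k, (y k)^2 < 1 - (a - t)^2} from hmem),
        show G (a, y) = S.indicator f (φ (ψ (a, y))) from rfl,
        Set.indicator_of_notMem (fun hc => hmem (hiff.mp hc))]
  -- lower bound for inner integral on Ioo t (t+1)
  have hinner : ∀ a ∈ Set.Ioo t (t+1),
      t ^ B i * A * (1 - (a - t)^2) ^ e ≤ ∫ y : Fin n → ℝ, G (a, y) := by
    intro a ha
    set u := 1 - (a - t)^2 with hu
    have hu0 : 0 < u := by
      rcases ha with ⟨h1', h2'⟩
      have : (a - t)^2 < 1 := by nlinarith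
      simp only [hu]; linarith
    set r := Real.sqrt u with hr
    have hr0 : 0 < r := Real.sqrt_pos.2 hu0
    have hT : MeasurableSet {y : Fin n → ℝ | ∑ k, (y k)^2 < u} :=
      (isOpen_lt (continuous_finset_sum _ fun k _ => (continuous_apply k).pow 2)
        continuous_const).measurableSet
    have hcalc : (∫ y : Fin n → ℝ, G (a, y))
        = |a| ^ B i * (u ^ e * A) := by
      simp only [hGeq a]
      rw [integral_indicator hT, integral_const_mul, piToBall _ u hu0, ← hr,
        scaleBall _ hr0, ← hA]
      congr 2
      rw [hr, Real.sqrt_eq_rpow, ← Real.rpow_mul hu0.le, he]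
      congr 1
      rw [hbb]
      ring
    rw [hcalc]
    have h1' : t ^ B i ≤ |a| ^ B i := by
      rw [abs_of_pos (lt_trans ht0 ha.1)]
      exact Real.rpow_le_rpow ht0.le ha.1.le (hB i)
    have hue : 0 ≤ u ^ e := Real.rpow_nonneg hu0.le e
    calc t ^ B i * A * u ^ e = t ^ B i * (u ^ e * A) := by ring
      _ ≤ |a| ^ B i * (u ^ e * A) :=
        mul_le_mul_of_nonneg_right h1' (mul_nonneg hue hA0)
  -- integrate the lower bound
  set F : ℝ → ℝ := fun s => t ^ B i * A * (1 - s^2) ^ e with hF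
  set L : ℝ → ℝ := fun a => Set.indicator (Set.Ioo t (t+1)) (fun a => F (a - t)) a with hL
  have hL_le : ∀ a, L a ≤ ∫ y : Fin n → ℝ, G (a, y) := by
    intro a
    by_cases ha : a ∈ Set.Ioo t (t+1)
    · show (Set.Ioo t (t+1)).indicator (fun a => F (a - t)) a ≤ _
      rw [Set.indicator_of_mem ha]; exact hinner a ha
    · show (Set.Ioo t (t+1)).indicator (fun a => F (a - t)) a ≤ _
      rw [Set.indicator_of_notMem ha]
      refine integral_nonneg fun y => ?_
      exact Set.indicator_nonneg (fun x _ => hf0 x) _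
  have hL0 : ∀ a, 0 ≤ L a := by
    intro a
    refine Set.indicator_nonneg (fun s hs => ?_) a
    have hu0 : 0 < 1 - (s - t)^2 := by
      rcases hs with ⟨h1', h2'⟩
      nlinarith
    exact mul_nonneg (mul_nonneg (Real.rpow_nonneg ht0.le _) hA0)
      (Real.rpow_nonneg hu0.le _)
  have hLmeas : Integrable (fun a => ∫ y : Fin n → ℝ, G (a, y)) volume :=
    h3.integral_prod_left
  have hmain : ∫ a : ℝ, L a ≤ ∫ a : ℝ, ∫ y : Fin n → ℝ, G (a, y) :=
    integral_mono_of_nonneg (Filter.Eventually.of_forall hL0) hLmeas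
      (Filter.Eventually.of_forall hL_le)
  have hLcalc : ∫ a : ℝ, L a = t ^ B i * A * ∫ s in Set.Ioo (0:ℝ) 1, (1 - s^2) ^ e := by
    have hLrw : ∀ a, L a = Set.indicator (Set.Ioo (0:ℝ) 1) F (a - t) := by
      intro a
      show (Set.Ioo t (t+1)).indicator (fun a => F (a - t)) a = _
      by_cases h : a ∈ Set.Ioo t (t+1)
      · rw [Set.indicator_of_mem h, Set.indicator_of_mem
          (show a - t ∈ Set.Ioo (0:ℝ) 1 from ⟨by linarith [h.1], by linarith [h.2]⟩)]
      · rw [Set.indicator_of_notMem h, Set.indicator_of_notMem]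
        intro hc
        exact h ⟨by linarith [hc.1], by linarith [hc.2]⟩
    simp_rw [hLrw]
    rw [integral_sub_right_eq_self (Set.indicator (Set.Ioo (0:ℝ) 1) F) t,
      integral_indicator measurableSet_Ioo, hF]
    rw [integral_const_mul]
  have hexp : ∀ s : ℝ, (1 - s^2) ^ (((∑ j, B j) - B i + (n : ℝ) + 1 - 1) / 2) = (1 - s^2) ^ e := by
    intro s
    congr 1
    rw [hsum, he]
    ring
  simp_rw [hexp]
  calc t ^ B i * A * ∫ s in Set.Ioo (0:ℝ) 1, (1 - s^2) ^ e
      = ∫ a : ℝ, L a := hLcalc.symm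
    _ ≤ ∫ a : ℝ, ∫ y : Fin n → ℝ, G (a, y) := hmain
    _ = ∫ x in S, f x := hRHS.symm
end

section
/- Let N >= 2 and let A, B be nonnegative vectors in R^N with sums a, b. If a_i - ((N+a-1)/(N+b)) b_i < 0 for some i, then the infimum over smooth bounded open sets Ω with 0 < ∫_Ω x^B dx < ∞ of the quotient (∫_{∂Ω} x^A dH^{N-1}) / (∫_Ω x^B dx)^{(N+a-1)/(N+b)} equals zero; in particular this quotient along the family of unit balls B(te_i,1) tends to 0 as t → ∞. -/
open MeasureTheory

open Metric Filter
open scoped ENNReal NNReal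

section Aux

lemma coordAbs_le_norm {m : ℕ} (x : EuclideanSpace ℝ (Fin m)) (j : Fin m) : |x j| ≤ ‖x‖ := by
  rw [EuclideanSpace.norm_eq]
  calc |x j| = Real.sqrt (‖x j‖ ^ 2) := by
        rw [Real.norm_eq_abs, Real.sqrt_sq_eq_abs, abs_abs]
    _ ≤ _ := Real.sqrt_le_sqrt (Finset.single_le_sum (f := fun k => ‖x k‖ ^ 2)
        (fun k _ => sq_nonneg _) (Finset.mem_univ j))

lemma hm_lt_top_of_isBounded {m : ℕ} {s : Set (EuclideanSpace ℝ (Fin m))}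
    (hs : Bornology.IsBounded s) : μH[(m : ℝ)] s < ⊤ := by
  set e := WithLp.equiv 2 (Fin m → ℝ) with he
  have hanti := PiLp.antilipschitzWith_ofLp 2 (fun _ : Fin m => ℝ)
  have hlip := hanti.to_rightInverse e.right_inv
  have himg : s = e.symm '' (e '' s) := by simp
  have h1 := hlip.hausdorffMeasure_image_le (d := (m : ℝ)) (by positivity) (e '' s)
  simp only [Equiv.invFun_as_coe] at h1; rw [← himg] at h1
  have h2 : (μH[(m : ℝ)] : Measure (Fin m → ℝ)) = volume := by
    simpa using MeasureTheory.hausdorffMeasure_pi_real (ι := Fin m)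
  have hbd : Bornology.IsBounded (e '' s) := (PiLp.lipschitzWith_ofLp 2 _).isBounded_image hs
  obtain ⟨R, hR⟩ := hbd.subset_closedBall 0
  have h3 : μH[(m : ℝ)] (e '' s) < ⊤ := by
    rw [h2]
    exact lt_of_le_of_lt (measure_mono hR) measure_closedBall_lt_top
  exact lt_of_le_of_lt h1
    (ENNReal.mul_lt_top (ENNReal.rpow_lt_top_of_nonneg (by positivity) ENNReal.coe_ne_top) h3)

lemma radial_lipschitzOnWith {E : Type*} [NormedAddCommGroup E] [NormedSpace ℝ E] :
    LipschitzOnWith 2 (fun x : E => ‖x‖⁻¹ • x) {x : E | 1 ≤ ‖x‖} := by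
  apply LipschitzOnWith.of_dist_le_mul
  intro x hx y hy
  simp only [Set.mem_setOf_eq] at hx hy
  have hx0 : (0:ℝ) < ‖x‖ := lt_of_lt_of_le one_pos hx
  have hy0 : (0:ℝ) < ‖y‖ := lt_of_lt_of_le one_pos hy
  rw [dist_eq_norm, dist_eq_norm]
  have key : ‖x‖⁻¹ • x - ‖y‖⁻¹ • y = ‖x‖⁻¹ • (x - y) + (‖x‖⁻¹ - ‖y‖⁻¹) • y := by
    rw [smul_sub, sub_smul]; abel
  rw [key]
  have h1 : ‖‖x‖⁻¹ • (x - y)‖ = ‖x‖⁻¹ * ‖x - y‖ := by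
    rw [norm_smul, Real.norm_eq_abs, abs_inv, abs_norm]
  have h2 : ‖(‖x‖⁻¹ - ‖y‖⁻¹) • y‖ = |‖x‖⁻¹ - ‖y‖⁻¹| * ‖y‖ := by
    rw [norm_smul, Real.norm_eq_abs]
  have h3 : |‖x‖⁻¹ - ‖y‖⁻¹| * ‖y‖ ≤ ‖x - y‖ := by
    have : ‖x‖⁻¹ - ‖y‖⁻¹ = (‖y‖ - ‖x‖) / (‖x‖ * ‖y‖) := by
      field_simp
    rw [this, abs_div, abs_of_pos (mul_pos hx0 hy0), div_mul_eq_mul_div]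
    rw [div_le_iff₀ (mul_pos hx0 hy0)]
    have h4 : |‖y‖ - ‖x‖| ≤ ‖x - y‖ := by
      rw [norm_sub_rev]; exact abs_norm_sub_norm_le y x
    nlinarith [mul_le_mul_of_nonneg_right h4 hy0.le,
      mul_nonneg (mul_nonneg (sub_nonneg.2 hx) (norm_nonneg (x - y))) (norm_nonneg y)]
  have h5 : ‖x‖⁻¹ * ‖x - y‖ ≤ ‖x - y‖ := by
    have : ‖x‖⁻¹ ≤ 1 := by rw [inv_le_one_iff₀]; right; exact hx
    nlinarith [norm_nonneg (x - y)]
  calc ‖‖x‖⁻¹ • (x - y) + (‖x‖⁻¹ - ‖y‖⁻¹) • y‖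
      ≤ ‖‖x‖⁻¹ • (x - y)‖ + ‖(‖x‖⁻¹ - ‖y‖⁻¹) • y‖ := norm_add_le _ _
    _ ≤ ‖x - y‖ + ‖x - y‖ := by rw [h1, h2]; exact add_le_add h5 h3
    _ = 2 * ‖x - y‖ := by ring
    _ = (2:ℝ≥0) * ‖x - y‖ := by norm_num

/-- Insertion of a constant coordinate, as a map of Euclidean spaces. -/
noncomputable def insertCoord {n : ℕ} (k : Fin (n + 1)) (c : ℝ)
    (y : EuclideanSpace ℝ (Fin n)) : EuclideanSpace ℝ (Fin (n + 1)) :=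
  (WithLp.equiv 2 _).symm (Fin.insertNth k c ((WithLp.equiv 2 _) y))

lemma insertCoord_isometry {n : ℕ} (k : Fin (n + 1)) (c : ℝ) : Isometry (insertCoord k c) := by
  apply Isometry.of_dist_eq
  intro y y'
  rw [EuclideanSpace.dist_eq, EuclideanSpace.dist_eq]
  congr 1
  rw [Fin.sum_univ_succAbove (fun j => dist (insertCoord k c y j) (insertCoord k c y' j) ^ 2) k]
  simp [insertCoord]

lemma hm_sphere_lt_top (n : ℕ) :
    μH[(n : ℝ)] (sphere (0 : EuclideanSpace ℝ (Fin (n + 1))) 1) < ⊤ := by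
  set E := EuclideanSpace ℝ (Fin (n + 1))
  set F : Fin (n + 1) → ℝ → Set E := fun k c => {x : E | x k = c ∧ ∀ j, |x j| ≤ 1} with hF
  set C : Set (EuclideanSpace ℝ (Fin n)) := {y | ∀ j, |y j| ≤ 1} with hC
  have hCbdd : Bornology.IsBounded C := by
    apply (Metric.isBounded_closedBall (x := (0 : EuclideanSpace ℝ (Fin n)))
      (r := Real.sqrt n)).subset
    intro y hy
    rw [mem_closedBall, dist_zero_right, EuclideanSpace.norm_eq]
    apply Real.sqrt_le_sqrt
    calc (∑ j, ‖y j‖ ^ 2) ≤ ∑ _j : Fin n, (1:ℝ) := by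
          apply Finset.sum_le_sum
          intro j _
          have := hy j
          rw [Real.norm_eq_abs]
          nlinarith [abs_nonneg (y j)]
      _ = n := by simp
  have hFsub : ∀ k c, F k c ⊆ insertCoord k c '' C := by
    intro k c x hx
    obtain ⟨hxk, hxle⟩ := hx
    refine ⟨(WithLp.equiv 2 _).symm (Fin.removeNth k ((WithLp.equiv 2 _) x)), ?_, ?_⟩
    · intro j
      exact hxle _
    · simp only [insertCoord, Equiv.apply_symm_apply]
      rw [← hxk]
      exact congrArg _ (Fin.insertNth_self_removeNth k _)
  have hFfin : ∀ k c, μH[(n : ℝ)] (F k c) < ⊤ := by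
    intro k c
    calc μH[(n : ℝ)] (F k c) ≤ μH[(n : ℝ)] (insertCoord k c '' C) := measure_mono (hFsub k c)
      _ = μH[(n : ℝ)] C := (insertCoord_isometry k c).hausdorffMeasure_image
          (Or.inl (by positivity)) C
      _ < ⊤ := hm_lt_top_of_isBounded hCbdd
  set K : Set E := ⋃ k, (F k 1 ∪ F k (-1)) with hK
  have hKS : K ⊆ {x : E | 1 ≤ ‖x‖} := by
    intro x hx
    simp only [hK, Set.mem_iUnion, Set.mem_union] at hx
    obtain ⟨k, hk⟩ := hx
    have h1 : |x k| = 1 := by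
      rcases hk with h | h
      · rw [h.1]; norm_num
      · rw [h.1]; norm_num
    exact le_trans (le_of_eq h1.symm) (coordAbs_le_norm x k)
  have hcover : sphere (0 : E) 1 ⊆ (fun x : E => ‖x‖⁻¹ • x) '' K := by
    intro x hx
    rw [mem_sphere_zero_iff_norm] at hx
    obtain ⟨k, -, hmax⟩ := Finset.exists_max_image Finset.univ (fun j => |x j|)
      ⟨0, Finset.mem_univ 0⟩
    have hk0 : 0 < |x k| := by
      rcases lt_or_ge 0 |x k| with h | h
      · exact h
      · exfalso
        have hx0 : ∀ j, ‖x j‖ = 0 := by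
          intro j
          have := le_trans (hmax j (Finset.mem_univ j)) h
          rw [Real.norm_eq_abs]
          exact le_antisymm this (abs_nonneg _)
        have : ‖x‖ = 0 := by
          rw [EuclideanSpace.norm_eq]
          rw [Finset.sum_eq_zero fun j _ => by rw [hx0 j]; ring]
          exact Real.sqrt_zero
        rw [hx] at this; norm_num at this
    set z : E := |x k|⁻¹ • x with hz
    have hzj : ∀ j, z j = |x k|⁻¹ * x j := fun j => rfl
    have hzk : |z k| = 1 := by
      rw [hzj, abs_mul, abs_inv, abs_abs]
      field_simp
    refine ⟨z, ?_, ?_⟩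
    · simp only [hK, Set.mem_iUnion, Set.mem_union]
      refine ⟨k, ?_⟩
      have hmemle : ∀ j, |z j| ≤ 1 := by
        intro j
        rw [hzj, abs_mul, abs_inv, abs_abs]
        rw [inv_mul_le_iff₀ hk0, mul_one]
        exact hmax j (Finset.mem_univ j)
      rcases abs_eq (by norm_num : (0:ℝ) ≤ 1) |>.mp hzk with h | h
      · exact Or.inl ⟨h, hmemle⟩
      · exact Or.inr ⟨h, hmemle⟩
    · show ‖z‖⁻¹ • z = x
      have hznorm : ‖z‖ = |x k|⁻¹ := by
        rw [hz, norm_smul, Real.norm_eq_abs, abs_inv, abs_abs, hx, mul_one]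
      rw [hznorm, inv_inv, hz, smul_smul, mul_inv_cancel₀ (ne_of_gt hk0), one_smul]
  have hKfin : μH[(n : ℝ)] K < ⊤ := by
    calc μH[(n : ℝ)] K ≤ ∑' k, μH[(n : ℝ)] (F k 1 ∪ F k (-1)) := measure_iUnion_le _
      _ < ⊤ := by
        rw [tsum_fintype]
        apply ENNReal.sum_lt_top.mpr
        intro k _
        exact lt_of_le_of_lt (measure_union_le _ _)
          (ENNReal.add_lt_top.mpr ⟨hFfin k 1, hFfin k (-1)⟩)
  calc μH[(n : ℝ)] (sphere (0 : E) 1) ≤ μH[(n : ℝ)] ((fun x : E => ‖x‖⁻¹ • x) '' K) :=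
        measure_mono hcover
    _ ≤ (2 : ℝ≥0) ^ (n : ℝ) * μH[(n : ℝ)] K :=
        (radial_lipschitzOnWith.mono hKS).hausdorffMeasure_image_le (by positivity)
    _ < ⊤ := ENNReal.mul_lt_top
        (ENNReal.rpow_lt_top_of_nonneg (by positivity) ENNReal.coe_ne_top) hKfin

variable {m : ℕ} (B : Fin m → ℝ)

lemma contProd_s4 (hB : ∀ j, 0 ≤ B j) (s : Finset (Fin m)) :
    Continuous fun x : EuclideanSpace ℝ (Fin m) => ∏ j ∈ s, |x j| ^ B j := by
  apply continuous_finset_prod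
  intro j _
  exact (((continuous_apply j).comp (PiLp.continuous_ofLp 2 _) : Continuous fun x : EuclideanSpace ℝ (Fin m) => x j).abs).rpow_const
    (fun x => Or.inr (hB j))

lemma intOnBall (hB : ∀ j, 0 ≤ B j) (s : Finset (Fin m)) (z : EuclideanSpace ℝ (Fin m)) :
    IntegrableOn (fun x => ∏ j ∈ s, |x j| ^ B j) (ball z 1) volume :=
  (((contProd_s4 B hB s).continuousOn).integrableOn_compact (isCompact_closedBall z 1)).mono_set
    ball_subset_closedBall

lemma intPosBall (hB : ∀ j, 0 ≤ B j) (s : Finset (Fin m)) (z : EuclideanSpace ℝ (Fin m)) :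
    0 < ∫ x in ball z 1, ∏ j ∈ s, |x j| ^ B j := by
  rw [setIntegral_pos_iff_support_of_nonneg_ae
    (Filter.Eventually.of_forall fun x => Finset.prod_nonneg fun j _ =>
      Real.rpow_nonneg (abs_nonneg _) _)
    (intOnBall B hB s z)]
  set U : Set (EuclideanSpace ℝ (Fin m)) := ⋃ j, {x | x j = 0} with hU
  have hU0 : volume U = 0 := by
    apply measure_iUnion_null
    intro j
    have : {x : EuclideanSpace ℝ (Fin m) | x j = 0} =
        ↑(LinearMap.ker (PiLp.projₗ (𝕜 := ℝ) 2 (fun _ : Fin m => ℝ) j)) := by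
      ext x; simp [LinearMap.mem_ker]
    rw [this]
    apply Measure.addHaar_submodule
    intro htop
    have h1 := (Submodule.eq_top_iff'.mp htop) (EuclideanSpace.single j 1)
    rw [LinearMap.mem_ker] at h1
    have : (EuclideanSpace.single j (1:ℝ)) j = 0 := h1
    simp at this
  have hsub : ball z 1 \ U ⊆
      Function.support (fun x => ∏ j ∈ s, |x j| ^ B j) ∩ ball z 1 := by
    rintro x ⟨hx1, hx2⟩
    refine ⟨?_, hx1⟩
    have hne : ∀ j, x j ≠ 0 := by
      intro j hj
      exact hx2 (Set.mem_iUnion.mpr ⟨j, hj⟩)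
    apply ne_of_gt
    apply Finset.prod_pos
    intro j _
    exact Real.rpow_pos_of_pos (abs_pos.mpr (hne j)) _
  calc (0 : ℝ≥0∞) < volume (ball z 1) := measure_ball_pos volume z one_pos
    _ = volume (ball z 1 \ U) := (measure_diff_null hU0).symm
    _ ≤ _ := measure_mono hsub

end Aux

/-- The set of weighted isoperimetric quotients over (smooth) bounded open sets
with positive finite monomial-weighted volume. -/
noncomputable def isoQuotients (n : ℕ) (A B : Fin (n + 1) → ℝ) : Set ℝ :=
  {r | ∃ Ω : Set (EuclideanSpace ℝ (Fin (n + 1))), IsOpen Ω ∧ Bornology.IsBounded Ω ∧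
    IntegrableOn (fun x => ∏ j, |x j| ^ B j) Ω ∧
    (0 < ∫ x in Ω, ∏ j, |x j| ^ B j) ∧
    r = (∫ x in frontier Ω, ∏ j, |x j| ^ A j ∂(μH[(n : ℝ)])) /
        (∫ x in Ω, ∏ j, |x j| ^ B j) ^
          (((n : ℝ) + 1 + (∑ j, A j) - 1) / ((n : ℝ) + 1 + ∑ j, B j))}

/-- If `a_i - ((N+a-1)/(N+b)) b_i < 0` then the isoperimetric constant vanishes,
and the quotient along the balls `B(t e_i, 1)` tends to `0` as `t → ∞`. -/
theorem stmt4 (n : ℕ) (hn : 1 ≤ n) (A B : Fin (n + 1) → ℝ)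
    (hA : ∀ j, 0 ≤ A j) (hB : ∀ j, 0 ≤ B j) (i : Fin (n + 1))
    (hneg : A i - (((n : ℝ) + 1 + (∑ j, A j) - 1) / ((n : ℝ) + 1 + ∑ j, B j)) * B i < 0) :
    sInf (isoQuotients n A B) = 0 ∧
    Filter.Tendsto
      (fun t : ℝ =>
        (∫ x in Metric.sphere (EuclideanSpace.single i t : EuclideanSpace ℝ (Fin (n + 1))) 1,
            ∏ j, |x j| ^ A j ∂(μH[(n : ℝ)])) /
          (∫ x in Metric.ball (EuclideanSpace.single i t : EuclideanSpace ℝ (Fin (n + 1))) 1,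
            ∏ j, |x j| ^ B j) ^
            (((n : ℝ) + 1 + (∑ j, A j) - 1) / ((n : ℝ) + 1 + ∑ j, B j)))
      Filter.atTop (nhds 0) := by
  classical
  set E := EuclideanSpace ℝ (Fin (n + 1)) with hE
  set a := ∑ j, A j with ha
  set b := ∑ j, B j with hb
  set α := ((n : ℝ) + 1 + a - 1) / ((n : ℝ) + 1 + b) with hal
  have hn1 : (1:ℝ) ≤ (n:ℝ) := by exact_mod_cast hn
  have ha0 : 0 ≤ a := Finset.sum_nonneg fun j _ => hA j
  have hb0 : 0 ≤ b := Finset.sum_nonneg fun j _ => hB j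
  have hαpos : 0 < α := div_pos (by linarith) (by linarith)
  have hABi : A i < α * B i := by linarith
  have hBipos : 0 < α * B i := lt_of_le_of_lt (hA i) hABi
  set Num : ℝ → ℝ := fun t => ∫ x in sphere (EuclideanSpace.single i t : E) 1,
      ∏ j, |x j| ^ A j ∂(μH[(n : ℝ)]) with hNum
  set Den : ℝ → ℝ := fun t => ∫ x in ball (EuclideanSpace.single i t : E) 1,
      ∏ j, |x j| ^ B j with hDen
  -- translation invariance of the Hausdorff measure of spheres
  have hsphere_meas : ∀ v : E, μH[(n : ℝ)] (sphere v 1) = μH[(n : ℝ)] (sphere (0:E) 1) := by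
    intro v
    have hiso : Isometry (fun x : E => x + v) :=
      Isometry.of_dist_eq fun x y => by simp [dist_eq_norm]
    have himg : (fun x : E => x + v) '' sphere 0 1 = sphere v 1 := by
      ext y
      constructor
      · rintro ⟨x, hx, rfl⟩
        rw [mem_sphere_zero_iff_norm] at hx
        rw [mem_sphere_iff_norm]
        simpa using hx
      · intro hy
        refine ⟨y - v, ?_, by simp⟩
        rw [mem_sphere_zero_iff_norm]
        rwa [mem_sphere_iff_norm] at hy
    rw [← himg]
    exact hiso.hausdorffMeasure_image (Or.inl (by positivity)) _
  have hsph_fin : ∀ v : E, μH[(n : ℝ)] (sphere v 1) < ⊤ := fun v => by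
    rw [hsphere_meas v]; exact hm_sphere_lt_top n
  set M := (μH[(n : ℝ)] (sphere (0:E) 1)).toReal with hM
  have hM0 : 0 ≤ M := ENNReal.toReal_nonneg
  have hNum0 : ∀ t, 0 ≤ Num t := fun t => setIntegral_nonneg
    (isClosed_sphere.measurableSet)
    (fun x _ => Finset.prod_nonneg fun j _ => Real.rpow_nonneg (abs_nonneg _) _)
  have hNumle : ∀ t : ℝ, 1 ≤ t → Num t ≤ (t+1) ^ (A i) * M := by
    intro t ht
    have hbound : ∀ x ∈ sphere (EuclideanSpace.single i t : E) 1,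
        ‖∏ j, |x j| ^ A j‖ ≤ (t+1) ^ (A i) := by
      intro x hx
      rw [mem_sphere_iff_norm] at hx
      have hcoord : ∀ j, |(x - EuclideanSpace.single i t : E) j| ≤ 1 := by
        intro j
        rw [← hx]
        exact coordAbs_le_norm _ j
      rw [Real.norm_eq_abs,
        abs_of_nonneg (Finset.prod_nonneg fun j _ => Real.rpow_nonneg (abs_nonneg _) _)]
      calc ∏ j, |x j| ^ A j ≤ ∏ j, (if j = i then (t+1) ^ (A i) else 1) := by
            apply Finset.prod_le_prod
              (fun j _ => Real.rpow_nonneg (abs_nonneg _) _)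
            intro j _
            by_cases hj : j = i
            · subst hj
              rw [if_pos rfl]
              have h1 : |x j - t| ≤ 1 := by
                have h2 := hcoord j
                simpa [PiLp.sub_apply, EuclideanSpace.single_apply] using h2
              have h3 : |x j| ≤ t + 1 := by
                calc |x j| = |(x j - t) + t| := by ring_nf
                  _ ≤ |x j - t| + |t| := abs_add_le _ _
                  _ ≤ 1 + t := add_le_add h1 (le_of_eq (abs_of_nonneg (by linarith)))
                  _ = t + 1 := by ring
              exact Real.rpow_le_rpow (abs_nonneg _) h3 (hA j)
            · rw [if_neg hj]
              have h1 : |x j| ≤ 1 := by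
                have h2 := hcoord j
                simpa [PiLp.sub_apply, EuclideanSpace.single_apply, hj] using h2
              exact Real.rpow_le_one (abs_nonneg _) h1 (hA j)
        _ = (t+1) ^ (A i) := by simp
    have hkey := norm_setIntegral_le_of_norm_le_const (μ := μH[(n:ℝ)]) (hsph_fin _)
      hbound
    rw [measureReal_def, hsphere_meas] at hkey
    exact le_trans (le_abs_self _) (by rw [← Real.norm_eq_abs]; exact hkey)
  have hDenpos : ∀ t, 0 < Den t := fun t => intPosBall B hB Finset.univ _
  set c := ∫ x in ball (0:E) 1, ∏ j ∈ Finset.univ.erase i, |x j| ^ B j with hcdef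
  have hcpos : 0 < c := intPosBall B hB _ 0
  have hshift : ∀ t : ℝ,
      ∫ x in ball (EuclideanSpace.single i t : E) 1,
        ∏ j ∈ Finset.univ.erase i, |x j| ^ B j = c := by
    intro t
    set v : E := EuclideanSpace.single i t with hv
    have hmp : MeasurePreserving (fun x : E => x + v) volume volume :=
      measurePreserving_add_right volume v
    have hemb : MeasurableEmbedding (fun x : E => x + v) :=
      (Homeomorph.addRight v).measurableEmbedding
    have hkey := hmp.setIntegral_preimage_emb hemb
      (fun x => ∏ j ∈ Finset.univ.erase i, |x j| ^ B j) (ball v 1)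
    rw [← hkey]
    have hpre : (fun x : E => x + v) ⁻¹' (ball v 1) = ball (0:E) 1 := by
      ext x
      simp [mem_ball, dist_eq_norm]
    rw [hpre, hcdef]
    apply setIntegral_congr_fun measurableSet_ball
    intro x _
    apply Finset.prod_congr rfl
    intro j hj
    have hji : j ≠ i := Finset.ne_of_mem_erase hj
    have hadd : (x + v : E) j = x j + v j := rfl
    rw [hadd, hv, EuclideanSpace.single_apply, if_neg hji, add_zero]
  have hDenge : ∀ t : ℝ, 2 ≤ t → (t-1) ^ (B i) * c ≤ Den t := by
    intro t ht
    have h1 : ∀ x ∈ ball (EuclideanSpace.single i t : E) 1,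
        (t-1) ^ (B i) * ∏ j ∈ Finset.univ.erase i, |x j| ^ B j ≤ ∏ j, |x j| ^ B j := by
      intro x hx
      rw [mem_ball, dist_eq_norm] at hx
      have hxi : t - 1 ≤ |x i| := by
        have h2 : |(x - EuclideanSpace.single i t : E) i| ≤ 1 :=
          le_of_lt (lt_of_le_of_lt (coordAbs_le_norm _ i) hx)
        have h3 : |x i - t| ≤ 1 := by
          simpa [PiLp.sub_apply, EuclideanSpace.single_apply] using h2
        have h4 : |t| - |t - x i| ≤ |x i| := by
          have := abs_sub_abs_le_abs_sub t (x i)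
          linarith
        rw [abs_of_nonneg (by linarith : (0:ℝ) ≤ t), abs_sub_comm] at h4
        linarith
      have h5 : (t-1) ^ (B i) ≤ |x i| ^ (B i) :=
        Real.rpow_le_rpow (by linarith) hxi (hB i)
      calc (t-1) ^ (B i) * ∏ j ∈ Finset.univ.erase i, |x j| ^ B j
          ≤ |x i| ^ (B i) * ∏ j ∈ Finset.univ.erase i, |x j| ^ B j :=
            mul_le_mul_of_nonneg_right h5
              (Finset.prod_nonneg fun j _ => Real.rpow_nonneg (abs_nonneg _) _)
        _ = ∏ j, |x j| ^ B j :=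
            Finset.mul_prod_erase Finset.univ (fun j => |x j| ^ B j) (Finset.mem_univ i)
    have hInt1 : IntegrableOn
        (fun x : E => (t-1) ^ (B i) * ∏ j ∈ Finset.univ.erase i, |x j| ^ B j)
        (ball (EuclideanSpace.single i t : E) 1) volume :=
      (intOnBall B hB _ _).const_mul _
    have hmono := setIntegral_mono_on hInt1 (intOnBall B hB Finset.univ _)
      measurableSet_ball h1
    rwa [integral_const_mul, hshift t] at hmono
  -- the quotient tends to zero
  have hQup : ∀ t : ℝ, 3 ≤ t →
      Num t / Den t ^ α ≤ (2 ^ (A i) * M / c ^ α) * (t-1) ^ (A i - α * B i) := by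
    intro t ht
    have ht1 : (1:ℝ) ≤ t := by linarith
    have hu : (0:ℝ) < t - 1 := by linarith
    have hDa : (t-1) ^ (B i * α) * c ^ α ≤ Den t ^ α := by
      have h1 : (t-1) ^ (B i) * c ≤ Den t := hDenge t (by linarith)
      have h2 := Real.rpow_le_rpow (by positivity) h1 hαpos.le
      rwa [Real.mul_rpow (by positivity) hcpos.le, ← Real.rpow_mul hu.le] at h2
    have hden2 : (0:ℝ) < (t-1) ^ (B i * α) * c ^ α := by positivity
    have step1 : Num t / Den t ^ α ≤ ((t+1) ^ (A i) * M) / ((t-1) ^ (B i * α) * c ^ α) :=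
      div_le_div₀ (by positivity) (hNumle t ht1) hden2 hDa
    have step2 : (t+1) ^ (A i) ≤ 2 ^ (A i) * (t-1) ^ (A i) := by
      have h3 : t + 1 ≤ 2 * (t - 1) := by linarith
      have h4 := Real.rpow_le_rpow (by linarith) h3 (hA i)
      rwa [Real.mul_rpow (by norm_num) hu.le] at h4
    have step3 : ((t+1) ^ (A i) * M) / ((t-1) ^ (B i * α) * c ^ α)
        ≤ (2 ^ (A i) * (t-1) ^ (A i) * M) / ((t-1) ^ (B i * α) * c ^ α) :=
      (div_le_div_iff_of_pos_right hden2).mpr (mul_le_mul_of_nonneg_right step2 hM0)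
    have heq : (2 ^ (A i) * (t-1) ^ (A i) * M) / ((t-1) ^ (B i * α) * c ^ α)
        = (2 ^ (A i) * M / c ^ α) * (t-1) ^ (A i - α * B i) := by
      rw [Real.rpow_sub hu, mul_comm (B i) α]
      have hc1 : (0:ℝ) < c ^ α := by positivity
      have ht2 : (0:ℝ) < (t-1) ^ (α * B i) := by positivity
      field_simp
    exact le_trans step1 (le_trans step3 (le_of_eq heq))
  have htend : Tendsto (fun t : ℝ => (2 ^ (A i) * M / c ^ α) * (t-1) ^ (A i - α * B i))
      atTop (nhds 0) := by
    have h1 : Tendsto (fun t : ℝ => (t-1) ^ (A i - α * B i)) atTop (nhds 0) := by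
      have h2 := tendsto_rpow_neg_atTop (y := α * B i - A i) (by linarith)
      have h3 : Tendsto (fun t : ℝ => t - 1) atTop atTop :=
        tendsto_atTop_add_const_right _ (-1) tendsto_id
      have h4 := h2.comp h3
      convert h4 using 1
      funext t
      simp [Function.comp, neg_sub]
    simpa using h1.const_mul (2 ^ (A i) * M / c ^ α)
  have hQtend : Tendsto (fun t : ℝ => Num t / Den t ^ α) atTop (nhds 0) := by
    apply squeeze_zero'
      (Filter.Eventually.of_forall fun t =>
        div_nonneg (hNum0 t) (Real.rpow_nonneg (hDenpos t).le _))
      _ htend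
    filter_upwards [Filter.eventually_ge_atTop (3:ℝ)] with t ht
    exact hQup t ht
  -- membership of the quotients
  have hmem : ∀ t : ℝ, Num t / Den t ^ α ∈ isoQuotients n A B := by
    intro t
    refine ⟨ball (EuclideanSpace.single i t : E) 1, isOpen_ball, isBounded_ball,
      intOnBall B hB Finset.univ _, hDenpos t, ?_⟩
    rw [frontier_ball _ one_ne_zero]
  have hlb : ∀ r ∈ isoQuotients n A B, 0 ≤ r := by
    rintro r ⟨Ω, hopen, hbdd, hint, hpos, rfl⟩
    apply div_nonneg
    · exact setIntegral_nonneg isClosed_frontier.measurableSet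
        (fun x _ => Finset.prod_nonneg fun j _ => Real.rpow_nonneg (abs_nonneg _) _)
    · exact Real.rpow_nonneg hpos.le _
  constructor
  · apply le_antisymm
    · exact ge_of_tendsto hQtend
        (Filter.Eventually.of_forall fun t => csInf_le ⟨0, hlb⟩ (hmem t))
    · exact le_csInf ⟨_, hmem 0⟩ hlb
  · exact hQtend
end

section
/- Let N >= 2 and let A, B be nonnegative vectors in R^N with a_i = b_i + 1 for some i and a_j = b_j for all j ≠ i. For every nonnegative u ∈ C_c^1(R^N), a_i ∫_{R^N} u(x) x^B dx <= ∫_{R^N} |∇u(x)| x^A dx. -/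
open MeasureTheory Topology

lemma cont_abs_rpow (p : ℝ) (hp : 0 ≤ p) : Continuous fun x : ℝ => |x| ^ p := by
  rw [continuous_iff_continuousAt]
  intro x
  exact (Real.continuousAt_rpow_const _ _ (Or.inr hp)).comp continuous_abs.continuousAt

lemma hasDerivAt_abs_rpow_mul (b : ℝ) (hb : 0 ≤ b) (y : ℝ) :
    HasDerivAt (fun y : ℝ => |y| ^ b * y) ((b + 1) * |y| ^ b) y := by
  rcases eq_or_lt_of_le hb with h | hbpos
  · simp only [← h, Real.rpow_zero, one_mul, zero_add]
    exact hasDerivAt_id' y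
  rcases eq_or_ne y 0 with rfl | hy
  · rw [hasDerivAt_iff_tendsto_slope]
    have hs : ∀ z : ℝ, z ≠ 0 → slope (fun y : ℝ => |y| ^ b * y) 0 z = |z| ^ b := by
      intro z hz
      simp [slope_def_field, div_eq_iff hz, mul_comm, Real.zero_rpow hbpos.ne']
    rw [Filter.tendsto_congr' (by filter_upwards [self_mem_nhdsWithin] using hs)]
    have : Filter.Tendsto (fun z : ℝ => |z| ^ b) (nhds 0) (nhds (|(0:ℝ)| ^ b)) :=
      ((Real.continuousAt_rpow_const _ _ (Or.inr hb)).comp continuous_abs.continuousAt)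
    simpa [Real.zero_rpow hbpos.ne', abs_zero] using this.mono_left nhdsWithin_le_nhds
  · have h1 : HasDerivAt (fun y : ℝ => |y| ^ b)
        (b * |y| ^ (b - 1) * (if y < 0 then -1 else 1)) y := by
      have habs : HasDerivAt (fun y : ℝ => |y|) (if y < 0 then -1 else 1) y := by
        rcases lt_or_gt_of_ne hy with h | h
        · simp only [if_pos h]
          exact (hasDerivAt_neg y).congr_of_eventuallyEq
            (by filter_upwards [Iio_mem_nhds h] with z hz
                simp [abs_of_neg (show z < 0 from hz)])
        · simp only [if_neg (not_lt.mpr h.le)]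
          exact (hasDerivAt_id y).congr_of_eventuallyEq
            (by filter_upwards [Ioi_mem_nhds h] with z hz
                simp [abs_of_pos (show 0 < z from hz)])
      have := (Real.hasDerivAt_rpow_const (p := b) (Or.inl (abs_ne_zero.mpr hy))).comp y habs
      simpa [mul_comm, mul_assoc, mul_left_comm, Function.comp_def] using this
    have := h1.mul (hasDerivAt_id y)
    convert this using 1
    any_goals rfl
    have hsy : (if y < 0 then (-1:ℝ) else 1) * y = |y| := by
      rcases lt_or_gt_of_ne hy with h | h
      · simp [if_pos h, abs_of_neg h]
      · simp [if_neg (not_lt.mpr h.le), abs_of_pos h]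
    have hb1 : |y| ^ (b-1) * |y| = |y| ^ b := by
      rw [← Real.rpow_add_one (abs_ne_zero.mpr hy)]; ring_nf
    calc (b + 1) * |y| ^ b = b * (|y| ^ (b-1) * |y|) + |y| ^ b * 1 := by rw [hb1]; ring
      _ = b * |y| ^ (b - 1) * (if y < 0 then (-1:ℝ) else 1) * y + |y| ^ b * 1 := by
          rw [mul_assoc (b * |y| ^ (b-1)), hsy, mul_assoc]

lemma oneDim (b : ℝ) (hb : 0 ≤ b) (v : ℝ → ℝ) (hv : ContDiff ℝ 1 v)
    (hs : HasCompactSupport v) :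
    (b + 1) * ∫ y, v y * |y| ^ b ≤ ∫ y, |deriv v y| * |y| ^ (b + 1) := by
  set g : ℝ → ℝ := fun y => |y| ^ b * y with hg
  have hg' : ∀ y, HasDerivAt g ((b + 1) * |y| ^ b) y := hasDerivAt_abs_rpow_mul b hb
  have hv' : ∀ y, HasDerivAt v (deriv v y) y :=
    fun y => (hv.differentiable one_ne_zero y).hasDerivAt
  have hvc : Continuous v := hv.continuous
  have hdc : Continuous (deriv v) := hv.continuous_deriv le_rfl
  have hgc : Continuous g := ((cont_abs_rpow b hb).mul continuous_id)
  -- integrabilities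
  have i1 : Integrable (v * fun y => (b + 1) * |y| ^ b) := by
    apply Continuous.integrable_of_hasCompactSupport
    · exact hvc.mul (continuous_const.mul (cont_abs_rpow b hb))
    · exact hs.mul_right
  have i2 : Integrable (deriv v * g) := by
    apply Continuous.integrable_of_hasCompactSupport
    · exact hdc.mul hgc
    · exact hs.deriv.mul_right
  have i3 : Integrable (v * g) := by
    apply Continuous.integrable_of_hasCompactSupport
    · exact hvc.mul hgc
    · exact hs.mul_right
  have ibp := integral_mul_deriv_eq_deriv_mul_of_integrable (fun y _ => hv' y) (fun y _ => hg' y) i1 i2 i3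
  have key : (b + 1) * ∫ y, v y * |y| ^ b = - ∫ y, deriv v y * g y := by
    rw [← ibp, ← integral_const_mul]
    congr 1; ext y; ring
  rw [key]
  have habs : ∀ y, |deriv v y * g y| = |deriv v y| * |y| ^ (b + 1) := by
    intro y
    rw [abs_mul]
    congr 1
    rcases eq_or_ne y 0 with rfl | hy
    · simp [hg, Real.zero_rpow (by positivity : b + 1 ≠ 0), Real.zero_rpow]
    · rw [hg]; dsimp only
      rw [abs_mul, abs_of_nonneg (Real.rpow_nonneg (abs_nonneg y) b),
        ← Real.rpow_add_one (abs_ne_zero.mpr hy)]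
  calc - ∫ y, deriv v y * g y ≤ |∫ y, deriv v y * g y| := neg_le_abs _
    _ ≤ ∫ y, |deriv v y * g y| := by
        simpa [Real.norm_eq_abs, abs_mul] using
          norm_integral_le_integral_norm (μ := volume) (fun y => deriv v y * g y)
    _ = ∫ y, |deriv v y| * |g y| := by simp_rw [abs_mul]
    _ = ∫ y, |deriv v y| * |y| ^ (b + 1) := by
        congr 1; ext y; rw [← abs_mul, habs y]

section core
variable {n : ℕ} {i : Fin (n + 1)}

noncomputable def Lmap (i : Fin (n + 1)) (z : Fin n → ℝ) (y : ℝ) :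
    EuclideanSpace ℝ (Fin (n + 1)) :=
  (WithLp.equiv 2 _).symm (i.insertNth y z)

lemma Lmap_apply (z : Fin n → ℝ) (y : ℝ) (j : Fin (n + 1)) :
    (Lmap i z y) j = Fin.insertNth (α := fun _ => ℝ) i y z j := rfl

lemma Lmap_isometry (z : Fin n → ℝ) : Isometry (Lmap i z) := by
  apply Isometry.of_dist_eq
  intro y1 y2
  rw [EuclideanSpace.dist_eq]
  rw [Fin.sum_univ_succAbove (fun j => dist ((Lmap i z y1) j) ((Lmap i z y2) j) ^ 2) i]
  simp [Lmap_apply, Fin.insertNth_apply_same, Fin.insertNth_apply_succAbove,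
    Real.sqrt_sq_eq_abs, Real.dist_eq]

lemma Lmap_affine (z : Fin n → ℝ) :
    Lmap i z = fun y => Lmap i z 0 + y • EuclideanSpace.single i (1:ℝ) := by
  funext y
  apply PiLp.ext
  intro j
  rw [PiLp.add_apply, PiLp.smul_apply, Lmap_apply, Lmap_apply, EuclideanSpace.single_apply]
  refine Fin.succAboveCases i ?_ ?_ j
  · simp [Fin.insertNth_apply_same]
  · intro k
    simp [Fin.insertNth_apply_succAbove, (Fin.succAbove_ne i k)]

lemma Lmap_hasDerivAt (z : Fin n → ℝ) (y : ℝ) :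
    HasDerivAt (Lmap i z) (EuclideanSpace.single i (1:ℝ)) y := by
  rw [Lmap_affine z]
  simpa using ((hasDerivAt_id y).smul_const (EuclideanSpace.single i (1:ℝ))).const_add
    (Lmap i z 0)

lemma Lmap_contDiff (z : Fin n → ℝ) : ContDiff ℝ 1 (Lmap i z) := by
  rw [Lmap_affine z]
  exact contDiff_const.add (contDiff_id.smul contDiff_const)

end core


/-- Fiberwise inequality: if `a_i = b_i + 1` and `a_j = b_j` for `j ≠ i`, then
`a_i ∫ u x^B dx ≤ ∫ |∇u| x^A dx` for all nonnegative `u ∈ C_c^1(ℝ^N)`. -/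
theorem stmt16 (n : ℕ) (hn : 1 ≤ n) (A B : Fin (n + 1) → ℝ)
    (hA : ∀ j, 0 ≤ A j) (hB : ∀ j, 0 ≤ B j) (i : Fin (n + 1))
    (hi : A i = B i + 1) (hj : ∀ j, j ≠ i → A j = B j)
    (u : EuclideanSpace ℝ (Fin (n + 1)) → ℝ) (hu : ContDiff ℝ 1 u)
    (husupp : HasCompactSupport u) (hupos : ∀ x, 0 ≤ u x) :
    A i * (∫ x, u x * ∏ j, |x j| ^ B j) ≤
      ∫ x, ‖fderiv ℝ u x‖ * ∏ j, |x j| ^ A j := by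
  classical
  let E := EuclideanSpace ℝ (Fin (n + 1))
  let Q := (Fin n → ℝ)
  let e1 := (MeasurableEquiv.toLp 2 (Fin (n + 1) → ℝ)).symm
  let e2 := MeasurableEquiv.piFinSuccAbove (fun _ : Fin (n + 1) => ℝ) i
  let e : E ≃ᵐ ℝ × Q := e1.trans e2
  have mp : MeasurePreserving e volume ((volume : Measure ℝ).prod (volume : Measure Q)) :=
    (measurePreserving_piFinSuccAbove (fun _ => (volume : Measure ℝ)) i).comp
      (EuclideanSpace.volume_preserving_symm_measurableEquiv_toLp (Fin (n + 1)))
  have mps : MeasurePreserving e.symm ((volume : Measure ℝ).prod (volume : Measure Q)) volume :=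
    MeasurePreserving.symm e mp
  have hesymm : ∀ p : ℝ × Q, e.symm p = Lmap i p.2 p.1 := by
    intro p
    show e1.symm (e2.symm p) = _
    have : e2.symm p = i.insertNth p.1 p.2 := by
      simp [e2, MeasurableEquiv.piFinSuccAbove_symm_apply, Fin.insertNthEquiv]
    rw [this]
    rfl
  -- transfer of integrability and integrals
  have hint : ∀ f : E → ℝ, Integrable f volume →
      Integrable (fun p : ℝ × Q => f (Lmap i p.2 p.1))
        ((volume : Measure ℝ).prod (volume : Measure Q)) := by
    intro f hf
    have h0 : Integrable (f ∘ e.symm) ((volume : Measure ℝ).prod (volume : Measure Q)) :=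
      (mps.integrable_comp_emb e.symm.measurableEmbedding).mpr hf
    have : (f ∘ e.symm) = fun p : ℝ × Q => f (Lmap i p.2 p.1) := by
      funext p; simp [Function.comp, hesymm p]
    rwa [this] at h0
  have hkey : ∀ f : E → ℝ, Integrable f volume →
      ∫ x, f x = ∫ z : Q, ∫ y : ℝ, f (Lmap i z y) := by
    intro f hf
    have h1 : ∫ p : ℝ × Q, f (e.symm p) ∂((volume : Measure ℝ).prod (volume : Measure Q))
        = ∫ x, f x := mps.integral_comp e.symm.measurableEmbedding f
    have h2 := integral_prod_symm (fun p : ℝ × Q => f (e.symm p))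
      (by simpa only [hesymm] using hint f hf)
    rw [← h1, h2]
    simp only [hesymm]
  -- continuity facts
  have hcont_prod : ∀ (P : Fin (n + 1) → ℝ), (∀ j, 0 ≤ P j) →
      Continuous (fun x : E => ∏ j, |x j| ^ P j) := by
    intro P hP
    apply continuous_finset_prod
    intro j _
    exact (cont_abs_rpow (P j) (hP j)).comp
      ((continuous_apply j).comp (PiLp.continuous_ofLp 2 (fun _ : Fin (n + 1) => ℝ)))
  have IB : Integrable (fun x : E => u x * ∏ j, |x j| ^ B j) volume :=
    Continuous.integrable_of_hasCompactSupport
      (hu.continuous.mul (hcont_prod B hB)) husupp.mul_right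
  have hfdc : Continuous (fun x : E => fderiv ℝ u x) := hu.continuous_fderiv one_ne_zero
  have IA : Integrable (fun x : E => ‖fderiv ℝ u x‖ * ∏ j, |x j| ^ A j) volume :=
    Continuous.integrable_of_hasCompactSupport
      (hfdc.norm.mul (hcont_prod A hA)) ((husupp.fderiv ℝ).norm.mul_right)
  rw [hkey _ IB, hkey _ IA, ← integral_const_mul]
  -- integrability of iterated integrals
  have hIB2 : Integrable (fun z : Q => A i *
      ∫ y : ℝ, u (Lmap i z y) * ∏ j, |(Lmap i z y) j| ^ B j) volume :=
    ((hint _ IB).integral_prod_right).const_mul _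
  have hIA2 : Integrable (fun z : Q =>
      ∫ y : ℝ, ‖fderiv ℝ u (Lmap i z y)‖ * ∏ j, |(Lmap i z y) j| ^ A j) volume :=
    (hint _ IA).integral_prod_right
  apply integral_mono hIB2 hIA2
  -- pointwise in z
  intro z
  dsimp only
  set b := B i with hbdef
  have hb : 0 ≤ b := hB i
  set C := ∏ j : Fin n, |z j| ^ B (i.succAbove j) with hCdef
  have hC : 0 ≤ C := Finset.prod_nonneg fun j _ => Real.rpow_nonneg (abs_nonneg _) _
  have hprodB : ∀ y : ℝ, (∏ j, |(Lmap i z y) j| ^ B j) = |y| ^ b * C := by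
    intro y
    rw [Fin.prod_univ_succAbove (fun j => |(Lmap i z y) j| ^ B j) i]
    simp [Lmap_apply, Fin.insertNth_apply_same, Fin.insertNth_apply_succAbove]
    rfl
  have hprodA : ∀ y : ℝ, (∏ j, |(Lmap i z y) j| ^ A j) = |y| ^ (b + 1) * C := by
    intro y
    rw [Fin.prod_univ_succAbove (fun j => |(Lmap i z y) j| ^ A j) i]
    simp only [Lmap_apply, Fin.insertNth_apply_same, Fin.insertNth_apply_succAbove]
    rw [hi]
    congr 1
    apply Finset.prod_congr rfl
    intro k _
    rw [hj _ (Fin.succAbove_ne i k)]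
  simp_rw [hprodB, hprodA]
  -- the section function
  set v : ℝ → ℝ := fun y => u (Lmap i z y) with hvdef
  have hvc : ContDiff ℝ 1 v := hu.comp (Lmap_contDiff z)
  have hce : Topology.IsClosedEmbedding (Lmap i z) := (Lmap_isometry z).isClosedEmbedding
  have hvs : HasCompactSupport v := husupp.comp_isClosedEmbedding hce
  have hderivv : ∀ y : ℝ, deriv v y = fderiv ℝ u (Lmap i z y) (EuclideanSpace.single i 1) := by
    intro y
    exact (((hu.differentiable one_ne_zero) (Lmap i z y)).hasFDerivAt.comp_hasDerivAt y
      (Lmap_hasDerivAt z y)).deriv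
  have hdbound : ∀ y : ℝ, |deriv v y| ≤ ‖fderiv ℝ u (Lmap i z y)‖ := by
    intro y
    rw [hderivv y, ← Real.norm_eq_abs]
    calc ‖fderiv ℝ u (Lmap i z y) (EuclideanSpace.single i 1)‖
        ≤ ‖fderiv ℝ u (Lmap i z y)‖ * ‖EuclideanSpace.single i (1:ℝ)‖ :=
          (fderiv ℝ u (Lmap i z y)).le_opNorm _
      _ = ‖fderiv ℝ u (Lmap i z y)‖ := by rw [EuclideanSpace.norm_single]; simp
  -- chain of inequalities
  have e1' : (fun y : ℝ => v y * (|y| ^ b * C)) = fun y => (v y * |y| ^ b) * C := by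
    funext y; ring
  have e2' : A i * ∫ y : ℝ, v y * (|y| ^ b * C) = ((b + 1) * ∫ y : ℝ, v y * |y| ^ b) * C := by
    rw [e1', integral_mul_const, hi, hbdef]; ring
  rw [e2']
  have step1 : ((b + 1) * ∫ y : ℝ, v y * |y| ^ b) * C
      ≤ (∫ y : ℝ, |deriv v y| * |y| ^ (b + 1)) * C :=
    mul_le_mul_of_nonneg_right (oneDim b hb v hvc hvs) hC
  refine step1.trans ?_
  rw [← integral_mul_const]
  -- final comparison
  have hwcont : Continuous fun y : ℝ => |y| ^ (b + 1) * C :=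
    (cont_abs_rpow _ (by linarith)).mul continuous_const
  have int1 : Integrable (fun y : ℝ => |deriv v y| * |y| ^ (b + 1) * C) volume := by
    apply Continuous.integrable_of_hasCompactSupport
    · exact ((hvc.continuous_deriv le_rfl).abs.mul (cont_abs_rpow _ (by linarith))).mul
        continuous_const
    · exact (hvs.deriv.abs.mul_right).mul_right
  have int2 : Integrable (fun y : ℝ => ‖fderiv ℝ u (Lmap i z y)‖ * (|y| ^ (b + 1) * C))
      volume := by
    apply Continuous.integrable_of_hasCompactSupport
    · exact ((hfdc.comp hce.continuous).norm.mul hwcont)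
    · exact (((husupp.fderiv ℝ).comp_isClosedEmbedding hce).norm).mul_right
  apply integral_mono int1 int2
  intro y
  dsimp only
  rw [mul_assoc]
  apply mul_le_mul_of_nonneg_right (hdbound y)
  positivity
end
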